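/- arXiv:2112.01694 — 3 statements merged into one kernel-verified Lean document; each statement's English description precedes it below -/
import Mathlib

section
/- For any subset A of ℝ^d, (A^ε)^{-ε} = A ⊔ F(A^c) (disjoint union), where F(A^c) = {x ∈ A^c : every closed ε-ball containing x intersects A}. -/
open Set Metric

/-- The closed ε-expansion of a set: `A^ε = ⋃_{a ∈ A} closedBall a ε`. -/
def expand {E : Type*} [NormedAddCommGroup E] (ε : ℝ) (A : Set E) : Set E :=
  ⋃ a ∈ A, closedBall a ε

/-- The ε-contraction of a set: `A^{-ε} = ((A^c)^ε)^c`. -/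
def contract {E : Type*} [NormedAddCommGroup E] (ε : ℝ) (A : Set E) : Set E :=
  (expand ε Aᶜ)ᶜ

/-- `F(S)`: the set of points of `S` such that every closed ε-ball containing the
point also intersects `Sᶜ`. -/
def bdryF {E : Type*} [NormedAddCommGroup E] (ε : ℝ) (S : Set E) : Set E :=
  {x ∈ S | ∀ y : E, x ∈ closedBall y ε → (closedBall y ε ∩ Sᶜ).Nonempty}

lemma mem_expand_iff {E : Type*} [NormedAddCommGroup E] {ε : ℝ} {A : Set E} {y : E} :
    y ∈ expand ε A ↔ (closedBall y ε ∩ A).Nonempty := by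
  simp only [expand, mem_iUnion, exists_prop, mem_closedBall, Set.Nonempty, mem_inter_iff]
  constructor
  · rintro ⟨a, ha, hd⟩; exact ⟨a, by rwa [dist_comm], ha⟩
  · rintro ⟨a, hd, ha⟩; exact ⟨a, ha, by rwa [dist_comm] at hd⟩

/-- `(A^ε)^{-ε}` is the disjoint union of `A` and `F(Aᶜ)`. -/
theorem contract_expand_eq_union {E : Type*} [NormedAddCommGroup E]
    (ε : ℝ) (A : Set E) :
    contract ε (expand ε A) = A ∪ bdryF ε Aᶜ ∧ Disjoint A (bdryF ε Aᶜ) := by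
  have key : ∀ x : E, x ∈ contract ε (expand ε A) ↔
      ∀ y : E, x ∈ closedBall y ε → (closedBall y ε ∩ A).Nonempty := by
    intro x
    simp only [contract, mem_compl_iff, mem_expand_iff]
    constructor
    · intro h y hxy
      by_contra hne
      exact h ⟨y, by simpa [mem_closedBall, dist_comm] using hxy,
        fun hy => hne (mem_expand_iff.mp hy)⟩
    · rintro h ⟨y, hy, hyc⟩
      exact hyc (mem_expand_iff.mpr (h y (by simpa [mem_closedBall, dist_comm] using hy)))
  constructor
  · ext x
    rw [key]
    constructor
    · intro h
      by_cases hxA : x ∈ A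
      · exact Or.inl hxA
      · refine Or.inr ⟨hxA, fun y hy => ?_⟩
        simpa [compl_compl] using h y hy
    · rintro (hxA | ⟨hx, h⟩) y hy
      · exact ⟨x, hy, hxA⟩
      · simpa [compl_compl] using h y hy
  · exact Set.disjoint_left.mpr fun x hxA hxF => hxF.1 hxA
end

section
/- The adversarial risk does not increase under opening/closing: for any measurable set A, R^ε((A^ε)^{-ε}) ≤ R^ε(A) and R^ε((A^{-ε})^ε) ≤ R^ε(A). -/
open Set Metric MeasureTheory
open scoped ENNReal

/-- The adversarial risk
`R^ε(A) = ∫ (1 − η x)·1_{A^ε}(x) + η x·1_{(Aᶜ)^ε}(x) dP`. -/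
noncomputable def advRisk {E : Type*} [NormedAddCommGroup E] [MeasurableSpace E]
    (P : Measure E) (η : E → ℝ) (ε : ℝ) (A : Set E) : ℝ≥0∞ :=
  ∫⁻ x, ENNReal.ofReal (1 - η x) * (expand ε A).indicator (fun _ => (1 : ℝ≥0∞)) x
      + ENNReal.ofReal (η x) * (expand ε Aᶜ).indicator (fun _ => (1 : ℝ≥0∞)) x ∂P

/-! The risk sees `A` only through `A^ε` and `(Aᶜ)^ε`, and its integrand is monotone in both
indicators. Closing and opening shrink both sets: `A ⊆ (A^ε)^{-ε}` and `(A^{-ε})^ε ⊆ A`, and by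
the duality `(B^{-ε})ᶜ = (Bᶜ)^ε` an inclusion between contractions is one between the expansions
of the complements. -/

section Morphology

variable {E : Type*} [NormedAddCommGroup E] {ε : ℝ} {A B : Set E} {x : E}

lemma mem_expand : x ∈ expand ε A ↔ ∃ a ∈ A, dist x a ≤ ε := by
  simp [expand]

lemma expand_mono (h : A ⊆ B) : expand ε A ⊆ expand ε B :=
  biUnion_subset_biUnion_left h

lemma compl_contract : (contract ε A)ᶜ = expand ε Aᶜ :=
  compl_compl _

lemma expand_contract_subset : expand ε (contract ε A) ⊆ A := by
  intro x hx
  obtain ⟨a, ha, hxa⟩ := mem_expand.1 hx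
  by_contra hxA
  exact ha (mem_expand.2 ⟨x, hxA, by rwa [dist_comm]⟩)

lemma subset_contract_expand : A ⊆ contract ε (expand ε A) := by
  rintro x hxA hx
  obtain ⟨y, hyA, hxy⟩ := mem_expand.1 hx
  exact hyA (mem_expand.2 ⟨x, hxA, by rwa [dist_comm]⟩)

end Morphology

lemma advRisk_mono {E : Type*} [NormedAddCommGroup E] [MeasurableSpace E]
    (P : Measure E) (η : E → ℝ) {ε : ℝ} {A B : Set E}
    (h : expand ε B ⊆ expand ε A) (hc : expand ε Bᶜ ⊆ expand ε Aᶜ) :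
    advRisk P η ε B ≤ advRisk P η ε A :=
  lintegral_mono fun _ => by gcongr

theorem advRisk_closing_opening_le_general {E : Type*} [NormedAddCommGroup E]
    [MeasurableSpace E] (P : Measure E) (η : E → ℝ) (ε : ℝ) (A : Set E) :
    advRisk P η ε (contract ε (expand ε A)) ≤ advRisk P η ε A ∧
      advRisk P η ε (expand ε (contract ε A)) ≤ advRisk P η ε A := by
  constructor
  · exact advRisk_mono P η expand_contract_subset
      (expand_mono (compl_subset_compl.2 subset_contract_expand))
  · refine advRisk_mono P η (expand_mono expand_contract_subset) ?_
    rw [← compl_contract, ← compl_contract]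
    exact compl_subset_compl.2 subset_contract_expand

/-- The adversarial risk does not increase under the closing `(A^ε)^{-ε}` and the
opening `(A^{-ε})^ε`. -/
theorem advRisk_closing_opening_le {E : Type*} [NormedAddCommGroup E]
    [MeasurableSpace E] [BorelSpace E] (P : Measure E) [IsProbabilityMeasure P]
    (η : E → ℝ) (hη : Measurable η) (hη0 : ∀ x, 0 ≤ η x) (hη1 : ∀ x, η x ≤ 1)
    (ε : ℝ) (A : Set E) (hA : MeasurableSet A) :
    advRisk P η ε (contract ε (expand ε A)) ≤ advRisk P η ε A ∧
      advRisk P η ε (expand ε (contract ε A)) ≤ advRisk P η ε A :=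
  advRisk_closing_opening_le_general P η ε A
end

section
/- Let S ⊆ ℝ^d and suppose that for every s ∈ ∂S (the topological boundary of S) there exists a nonempty open convex set C with C ⊆ S and s ∈ ∂C. Then the Lebesgue measure of ∂S is zero. -/
/-!
Let `x ∈ ∂S` and let `C ⊆ S` be open and convex with `x ∈ ∂C`. As `x ∈ closure C`, every
homothety centred at `x` with ratio in `(0, 1]` maps `C` into itself, so the proportion of
`closedBall x r` occupied by `C` can only grow as `r ↓ 0`; it stays above some `δ > 0`.
Since `C ⊆ interior S` misses `∂S`, the density of `∂S` at `x` is at most `1 - δ`. Thus `∂S` has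
no density point, and the Lebesgue density theorem makes it null.
-/

open Set MeasureTheory Metric Filter Topology AffineMap Module

theorem Convex.image_homothety_interior_subset {𝕜 E : Type*} [Field 𝕜] [LinearOrder 𝕜]
    [IsStrictOrderedRing 𝕜] [AddCommGroup E] [Module 𝕜 E] [TopologicalSpace E]
    [IsTopologicalAddGroup E] [ContinuousConstSMul 𝕜 E] {s : Set E} (hs : Convex 𝕜 s) {x : E}
    (hx : x ∈ closure s) {t : 𝕜} (ht₀ : 0 < t) (ht₁ : t ≤ 1) :
    homothety x t '' interior s ⊆ interior s := by
  rintro _ ⟨y, hy, rfl⟩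
  rw [homothety_eq_lineMap, lineMap_apply_module]
  exact hs.combo_closure_interior_mem_interior hx hy (sub_nonneg.2 ht₁) ht₀ (sub_add_cancel 1 t)

theorem measure_inter_closedBall_pos_of_mem_closure {α : Type*} [PseudoMetricSpace α]
    [MeasurableSpace α] (μ : Measure α) [μ.IsOpenPosMeasure] {s : Set α} (hs : IsOpen s)
    {x : α} (hx : x ∈ closure s) {R : ℝ} (hR : 0 < R) : 0 < μ (s ∩ closedBall x R) := by
  obtain ⟨y, hys, hxy⟩ := Metric.mem_closure_iff.1 hx R hR
  refine ((hs.inter isOpen_ball).measure_pos μ ⟨y, hys, mem_ball_comm.2 hxy⟩).trans_le ?_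
  exact measure_mono (inter_subset_inter_right s ball_subset_closedBall)

section Density

variable {α : Type*} [MeasurableSpace α] (μ : Measure α)

theorem not_tendsto_density_one_of_disjoint [PseudoMetricSpace α] [OpensMeasurableSpace α]
    {s t : Set α} (ht : MeasurableSet t) (hst : Disjoint s t) {x : α} {δ : ENNReal} (hδ : δ ≠ 0)
    (htδ : ∀ᶠ r in 𝓝[>] 0, δ ≤ μ (t ∩ closedBall x r) / μ (closedBall x r)) :
    ¬Tendsto (fun r => μ (s ∩ closedBall x r) / μ (closedBall x r)) (𝓝[>] 0) (𝓝 1) := by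
  intro hs
  have hsum :
      ∀ᶠ r in 𝓝[>] 0, μ (s ∩ closedBall x r) / μ (closedBall x r) + δ ≤ 1 := by
    filter_upwards [htδ] with r hr
    calc μ (s ∩ closedBall x r) / μ (closedBall x r) + δ
        ≤ μ (s ∩ closedBall x r) / μ (closedBall x r)
          + μ (t ∩ closedBall x r) / μ (closedBall x r) := add_le_add_right hr _
      _ = μ (s ∩ closedBall x r ∪ t ∩ closedBall x r) / μ (closedBall x r) := by
        rw [ENNReal.div_add_div_same, measure_union
          (hst.mono inter_subset_left inter_subset_left) (ht.inter measurableSet_closedBall)]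
      _ ≤ 1 := ENNReal.div_le_of_le_mul <| by
        rw [one_mul]
        exact measure_mono (union_subset inter_subset_right inter_subset_right)
  have hlim : 1 + δ ≤ 1 + 0 := by simpa using le_of_tendsto (hs.add_const δ) hsum
  exact hδ (nonpos_iff_eq_zero.1 ((ENNReal.add_le_add_iff_left ENNReal.one_ne_top).1 hlim))

theorem measure_eq_zero_of_forall_not_tendsto_density_one [MetricSpace α] [BorelSpace α]
    [SecondCountableTopology α] [HasBesicovitchCovering α] [IsLocallyFiniteMeasure μ]
    {s : Set α} (h : ∀ x ∈ s,
      ¬Tendsto (fun r => μ (s ∩ closedBall x r) / μ (closedBall x r)) (𝓝[>] 0) (𝓝 1)) :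
    μ s = 0 := by
  rw [← Measure.restrict_apply_self]
  exact measure_mono_null h (ae_iff.1 (Besicovitch.ae_tendsto_measure_inter_div μ s))

end Density

section AddHaar

variable {E : Type*} [NormedAddCommGroup E] [NormedSpace ℝ E] [MeasurableSpace E] [BorelSpace E]
  [FiniteDimensional ℝ E] (μ : Measure E) [μ.IsAddHaarMeasure]
  {s : Set E} {x : E}

theorem IsOpen.addHaar_inter_closedBall_div_le_of_convex (hs : IsOpen s) (hconv : Convex ℝ s)
    (hx : x ∈ closure s) {r R : ℝ} (hr : 0 < r) (hrR : r ≤ R) :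
    μ (s ∩ closedBall x R) / μ (closedBall x R)
      ≤ μ (s ∩ closedBall x r) / μ (closedBall x r) := by
  have hR : 0 < R := hr.trans_le hrR
  set t := r / R
  have ht : 0 < t := div_pos hr hR
  have hmaps : homothety x t '' (s ∩ closedBall x R) ⊆ s ∩ closedBall x r := by
    refine subset_inter ((image_mono inter_subset_left).trans ?_) ?_
    · simpa only [hs.interior_eq] using
        hconv.image_homothety_interior_subset hx ht ((div_le_one hR).2 hrR)
    · rintro _ ⟨y, ⟨-, hy⟩, rfl⟩
      rw [mem_closedBall, dist_homothety_center, Real.norm_of_nonneg ht.le, dist_comm]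
      calc t * dist y x ≤ t * R := mul_le_mul_of_nonneg_left (mem_closedBall.1 hy) ht.le
        _ = r := div_mul_cancel₀ r hR.ne'
  have hscale :
      μ (closedBall x r) = ENNReal.ofReal (t ^ finrank ℝ E) * μ (closedBall x R) := by
    rw [Measure.addHaar_closedBall_center μ x R,
      ← Measure.addHaar_closedBall_mul μ x ht.le hR.le, div_mul_cancel₀ r hR.ne']
  have htn : ENNReal.ofReal (t ^ finrank ℝ E) ≠ 0 := by
    simpa using pow_pos ht (finrank ℝ E)
  calc μ (s ∩ closedBall x R) / μ (closedBall x R)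
      = μ (homothety x t '' (s ∩ closedBall x R)) / μ (closedBall x r) := by
        rw [Measure.addHaar_image_homothety, hscale, abs_of_pos (pow_pos ht _),
          ENNReal.mul_div_mul_left _ _ htn ENNReal.ofReal_ne_top]
    _ ≤ μ (s ∩ closedBall x r) / μ (closedBall x r) :=
        ENNReal.div_le_div_right (measure_mono hmaps) _

theorem IsOpen.exists_pos_eventually_le_addHaar_inter_closedBall_div_of_convex (hs : IsOpen s)
    (hconv : Convex ℝ s) (hx : x ∈ closure s) :
    ∃ δ > 0, ∀ᶠ r in 𝓝[>] 0, δ ≤ μ (s ∩ closedBall x r) / μ (closedBall x r) := by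
  refine ⟨μ (s ∩ closedBall x 1) / μ (closedBall x 1),
    ENNReal.div_pos (measure_inter_closedBall_pos_of_mem_closure μ hs hx one_pos).ne'
      measure_closedBall_lt_top.ne, ?_⟩
  filter_upwards [Ioc_mem_nhdsGT one_pos] with r hr
  exact hs.addHaar_inter_closedBall_div_le_of_convex μ hconv hx hr.1 hr.2

end AddHaar

/-- If every boundary point of `S ⊆ ℝ^d` lies on the boundary of some nonempty open
convex set contained in `S`, then the Lebesgue measure of `∂S` is zero. -/
theorem frontier_measure_zero_of_inscribed_convex {d : ℕ}
    (S : Set (Fin d → ℝ))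
    (h : ∀ s ∈ frontier S, ∃ C : Set (Fin d → ℝ),
      C.Nonempty ∧ IsOpen C ∧ Convex ℝ C ∧ C ⊆ S ∧ s ∈ frontier C) :
    volume (frontier S) = 0 := by
  refine measure_eq_zero_of_forall_not_tendsto_density_one volume fun x hx => ?_
  obtain ⟨C, -, hCo, hCc, hCS, hxC⟩ := h x hx
  obtain ⟨δ, hδ, hCδ⟩ :=
    hCo.exists_pos_eventually_le_addHaar_inter_closedBall_div_of_convex volume hCc hxC.1
  have hdisj : Disjoint (frontier S) C :=
    (disjoint_interior_frontier.mono_left (interior_maximal hCS hCo)).symm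
  exact not_tendsto_density_one_of_disjoint volume hCo.measurableSet hdisj hδ.ne' hCδ
end
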